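/- Let α, β ∈ POPI_n(Y). Then (α, β) ∈ 𝒟 (Green's D-relation on POPI_n(Y)) if and only if either both α and β are regular and rank(α) = rank(β), or both α and β are not regular and Dom(α) = Dom(β). -/

import Mathlib

/-!
An element of `POPI_n(Y)` is regular exactly when its domain lies in `Y`, for then its inverse
belongs to `POPI_n(Y)`. Elements with the same domain are `ℛ`-related through the relabelling
`α⁻¹β`, which is again orientation-preserving, and `ℛ`-related elements have the same domain.
Two distinct `ℒ`-related elements `α = δγ`, `γ = δ'α` have the same image, hence the same rank;
since the injective `δ` maps `dom γ` into `dom α ∩ Y`, this forces both domains into `Y`. So a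
non-regular element is `ℒ`-related only to itself, and its `𝒟`-class is its `ℛ`-class. Regular
elements of equal rank are linked through the increasing bijection `dom β → im α`.
-/

open scoped Classical

namespace POPIpaper

/-- Partial transformations of `Ω_n = {1,…,n}`, modelled on `Fin n`. -/
abbrev PT (n : ℕ) := Fin n → Option (Fin n)

/-- Composition of partial transformations (apply `α` first, then `β`). -/
def comp {n : ℕ} (α β : PT n) : PT n := fun x => (α x).bind β

/-- Domain of a partial transformation. -/
noncomputable def dom {n : ℕ} (α : PT n) : Finset (Fin n) :=
  Finset.univ.filter (fun x => (α x).isSome)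

/-- Image of a partial transformation. -/
noncomputable def im {n : ℕ} (α : PT n) : Finset (Fin n) :=
  Finset.univ.filter (fun y => ∃ x, α x = some y)

/-- rank(α) = |Im(α)|. -/
noncomputable def rank {n : ℕ} (α : PT n) : ℕ := (im α).card

/-- Injectivity of a partial transformation. -/
def Inj {n : ℕ} (α : PT n) : Prop :=
  ∀ x y z : Fin n, α x = some z → α y = some z → x = y

/-- Orientation-preserving: the sequence of images, taken along the increasing
enumeration of the domain, is cyclic, i.e. some rotation of it is sorted. -/
def OP {n : ℕ} (α : PT n) : Prop :=
  ∃ k : ℕ, (((List.finRange n).filterMap α).rotate k).Pairwise (· ≤ ·)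

/-- The semigroup `POPI_n(Y)` as a set of partial transformations:
injective, orientation-preserving, with image contained in `Y`. -/
def POPI (n : ℕ) (Y : Finset (Fin n)) : Set (PT n) :=
  {α | Inj α ∧ OP α ∧ ∀ x y : Fin n, α x = some y → y ∈ Y}

/-- Regularity of `α` as an element of the subsemigroup `S`. -/
def IsRegularIn {n : ℕ} (S : Set (PT n)) (α : PT n) : Prop :=
  ∃ β ∈ S, comp (comp α β) α = α

/-- The partial identity on a subset `A`. -/
def idp {n : ℕ} (A : Finset (Fin n)) : PT n :=
  fun x => if x ∈ A then some x else none

/-- Fixed points of a partial transformation. -/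
noncomputable def fix {n : ℕ} (α : PT n) : Finset (Fin n) :=
  Finset.univ.filter (fun x => α x = some x)

/-- Green's relation ℒ on the set `S`: `S¹α = S¹β`. -/
def LRel {n : ℕ} (S : Set (PT n)) (α β : PT n) : Prop :=
  (α = β ∨ ∃ γ ∈ S, comp γ β = α) ∧ (β = α ∨ ∃ γ ∈ S, comp γ α = β)

/-- Green's relation ℛ on the set `S`: `αS¹ = βS¹`. -/
def RRel {n : ℕ} (S : Set (PT n)) (α β : PT n) : Prop :=
  (α = β ∨ ∃ γ ∈ S, comp β γ = α) ∧ (β = α ∨ ∃ γ ∈ S, comp α γ = β)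

/-- Green's relation ℋ = ℒ ∩ ℛ. -/
def HRel {n : ℕ} (S : Set (PT n)) (α β : PT n) : Prop :=
  LRel S α β ∧ RRel S α β

/-- Green's relation 𝒟 = ℒ ∘ ℛ. -/
def DRel {n : ℕ} (S : Set (PT n)) (α β : PT n) : Prop :=
  ∃ γ ∈ S, LRel S α γ ∧ RRel S γ β

/-- `Φ` is a semigroup isomorphism from the subsemigroup `S` onto `T`. -/
def IsIso {n : ℕ} (S T : Set (PT n)) (Φ : PT n → PT n) : Prop :=
  Set.BijOn Φ S T ∧ ∀ a ∈ S, ∀ b ∈ S, Φ (comp a b) = comp (Φ a) (Φ b)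

/-- The product `β * l₁ * ⋯ * l_k` of a nonempty list of partial transformations. -/
def prodList {n : ℕ} (β : PT n) (l : List (PT n)) : PT n := l.foldl comp β

theorem _root_.List.IsRotated.filterMap {α β : Type*} {l₁ l₂ : List α} (h : l₁ ~r l₂)
    (f : α → Option β) : l₁.filterMap f ~r l₂.filterMap f := by
  obtain ⟨k, rfl⟩ := h
  conv_lhs => rw [← List.take_append_drop (k % l₁.length) l₁]
  rw [List.rotate_eq_drop_append_take_mod, List.filterMap_append, List.filterMap_append]
  exact List.isRotated_append

section PartialMaps

variable {n : ℕ} {Y : Finset (Fin n)} {α β γ δ : PT n}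

lemma mem_dom {x : Fin n} : x ∈ dom α ↔ ∃ y, α x = some y := by
  simp [dom, Option.isSome_iff_exists]

lemma mem_im {y : Fin n} : y ∈ im α ↔ ∃ x, α x = some y := by
  simp [im]

lemma comp_eq_some {x z : Fin n} : comp α β x = some z ↔ ∃ y, α x = some y ∧ β y = some z :=
  Option.bind_eq_some_iff

lemma dom_comp_subset (α β : PT n) : dom (comp α β) ⊆ dom α := by
  intro x hx
  obtain ⟨z, hz⟩ := mem_dom.mp hx
  obtain ⟨y, hy, -⟩ := comp_eq_some.mp hz
  exact mem_dom.mpr ⟨y, hy⟩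

lemma im_comp_subset (α β : PT n) : im (comp α β) ⊆ im β := by
  intro z hz
  obtain ⟨x, hx⟩ := mem_im.mp hz
  obtain ⟨y, -, hy⟩ := comp_eq_some.mp hx
  exact mem_im.mpr ⟨y, hy⟩

lemma rank_eq_card_dom (hα : Inj α) : rank α = (dom α).card := by
  symm
  refine Finset.card_bij (fun x hx => (α x).get (by simpa [dom] using hx)) ?_ ?_ ?_
  · intro x hx
    exact mem_im.mpr ⟨x, by simp⟩
  · intro x hx x' hx' h
    exact hα x x' _ (Option.some_get _).symm (by rw [h, Option.some_get])
  · intro y hy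
    obtain ⟨x, hx⟩ := mem_im.mp hy
    exact ⟨x, mem_dom.mpr ⟨y, hx⟩, by simp [hx]⟩

lemma card_dom_comp_le (hδ : Inj δ) (α : PT n) :
    (dom (comp δ α)).card ≤ (dom α ∩ im δ).card := by
  refine Finset.card_le_card_of_injOn (fun x => (δ x).getD x) ?_ ?_
  · intro x hx
    obtain ⟨z, hz⟩ := mem_dom.mp hx
    obtain ⟨y, hy, hyz⟩ := comp_eq_some.mp hz
    simp only [hy, Option.getD_some]
    exact Finset.mem_inter.mpr ⟨mem_dom.mpr ⟨z, hyz⟩, mem_im.mpr ⟨x, hy⟩⟩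
  · intro x hx x' hx' h
    obtain ⟨y, hy, -⟩ := comp_eq_some.mp (mem_dom.mp hx).choose_spec
    obtain ⟨y', hy', -⟩ := comp_eq_some.mp (mem_dom.mp hx').choose_spec
    simp only [hy, hy', Option.getD_some] at h
    exact hδ x x' y hy (h ▸ hy')

lemma RRel.dom_eq {S : Set (PT n)} (h : RRel S α β) : dom α = dom β := by
  rcases h with ⟨h₁ | ⟨γ, -, h₁⟩, h₂ | ⟨γ', -, h₂⟩⟩
  · rw [h₁]
  · rw [h₁]
  · rw [h₂]
  · exact (h₁ ▸ dom_comp_subset β γ).antisymm (h₂ ▸ dom_comp_subset α γ')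

lemma im_subset_of_mem_POPI (hα : α ∈ POPI n Y) : im α ⊆ Y := by
  intro y hy
  obtain ⟨x, hx⟩ := mem_im.mp hy
  exact hα.2.2 x y hx

lemma OP.of_isRotated (h : (List.finRange n).filterMap α ~r (List.finRange n).filterMap β)
    (hα : OP α) : OP β := by
  obtain ⟨k, hk⟩ := hα
  obtain ⟨j, hj⟩ := h.symm
  exact ⟨j + k, by rwa [← List.rotate_rotate, hj]⟩

lemma OP.of_monotone (h : ∀ x x' y y', x < x' → α x = some y → α x' = some y' → y ≤ y') :
    OP α := by
  refine ⟨0, ?_⟩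
  simpa using (List.pairwise_lt_finRange n).filterMap α fun x x' hx y hy y' hy' =>
    h x x' y y' hx hy hy'

lemma filterMap_finRange_eq {f : PT n} {l : List (Fin n)} (hl : l.Pairwise (· < ·))
    (hdom : ∀ x, (f x).isSome → x ∈ l) :
    (List.finRange n).filterMap f = l.filterMap f := by
  have hfilter : ∀ m : List (Fin n),
      m.filterMap f = (m.filter fun x => (f x).isSome).filterMap f := by
    intro m
    rw [List.filterMap_filter]
    congr 1
    funext x
    cases f x <;> rfl
  rw [hfilter, hfilter l]
  congr 1
  refine ((List.pairwise_lt_finRange n).filter _).eq_of_mem_iff (hl.filter _) fun x => ?_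
  simp only [List.mem_filter, List.mem_finRange, true_and]
  exact ⟨fun h => ⟨hdom x h, h⟩, And.right⟩

end PartialMaps

section Relabelling

variable {n : ℕ} {Y : Finset (Fin n)} {α β : PT n}

/-- `α⁻¹β` in the left-to-right notation of `comp`: undo the injective `α`, then apply `β`. -/
noncomputable def invComp (α β : PT n) : PT n :=
  fun y => if h : ∃ x, α x = some y then β h.choose else none

lemma invComp_eq_some (hα : Inj α) {y z : Fin n} :
    invComp α β y = some z ↔ ∃ x, α x = some y ∧ β x = some z := by
  unfold invComp
  split_ifs with h
  · refine ⟨fun hz => ⟨_, h.choose_spec, hz⟩, ?_⟩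
    rintro ⟨x, hx, hz⟩
    rwa [hα _ _ _ h.choose_spec hx]
  · simp only [false_iff]
    rintro ⟨x, hx, -⟩
    exact h ⟨x, hx⟩

lemma comp_invComp (hα : Inj α) (hd : dom β ⊆ dom α) : comp α (invComp α β) = β := by
  funext x
  refine Option.ext fun z => ?_
  rw [comp_eq_some]
  constructor
  · rintro ⟨y, hy, hz⟩
    obtain ⟨x', hx', hz'⟩ := (invComp_eq_some hα).mp hz
    rwa [hα x x' y hy hx']
  · intro hz
    obtain ⟨y, hy⟩ := mem_dom.mp (hd (mem_dom.mpr ⟨z, hz⟩))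
    exact ⟨y, hy, (invComp_eq_some hα).mpr ⟨x, hy, hz⟩⟩

/-- `invComp α β` lists the values of `β` along `im α` in increasing order, and since `α` is
orientation-preserving that order is a rotation of the increasing order of `dom α`. -/
lemma op_invComp (hα : α ∈ POPI n Y) (hβ : OP β) (hd : dom β ⊆ dom α) : OP (invComp α β) := by
  obtain ⟨k, hk⟩ := hα.2.1
  set L := (List.finRange n).filterMap α
  have hL : L.Nodup := (List.nodup_finRange n).filterMap fun x x' y hx hx' => hα.1 x x' y hx hx'
  have hsorted : (L.rotate k).Pairwise (· < ·) :=
    (hk.and (List.nodup_rotate.mpr hL)).imp fun h => lt_of_le_of_ne h.1 h.2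
  have hlist :
      (List.finRange n).filterMap (invComp α β) = (L.rotate k).filterMap (invComp α β) := by
    refine filterMap_finRange_eq hsorted fun y hy => ?_
    obtain ⟨z, hz⟩ := Option.isSome_iff_exists.mp hy
    obtain ⟨x, hx, -⟩ := (invComp_eq_some hα.1).mp hz
    simpa [List.mem_rotate, L] using ⟨x, hx⟩
  have hcomp : L.filterMap (invComp α β) = (List.finRange n).filterMap β := by
    rw [List.filterMap_filterMap]
    exact congrArg (List.filterMap · _) (comp_invComp hα.1 hd)
  refine OP.of_isRotated ?_ hβ
  rw [hlist, ← hcomp]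
  exact List.IsRotated.filterMap ⟨k, rfl⟩ _

lemma invComp_mem (hα : α ∈ POPI n Y) (hβ : β ∈ POPI n Y) (hd : dom β ⊆ dom α) :
    invComp α β ∈ POPI n Y := by
  refine ⟨fun y y' z hy hy' => ?_, op_invComp hα hβ.2.1 hd, fun y z hz => ?_⟩
  · obtain ⟨x, hx, hxz⟩ := (invComp_eq_some hα.1).mp hy
    obtain ⟨x', hx', hxz'⟩ := (invComp_eq_some hα.1).mp hy'
    rw [hβ.1 x x' z hxz hxz', hx'] at hx
    exact Option.some_injective _ hx.symm
  · obtain ⟨x, -, hxz⟩ := (invComp_eq_some hα.1).mp hz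
    exact hβ.2.2 x z hxz

end Relabelling

section PartialIdentity

variable {n : ℕ} {Y A : Finset (Fin n)} {α : PT n}

lemma idp_eq_some {x y : Fin n} : idp A x = some y ↔ x ∈ A ∧ x = y := by
  unfold idp
  split_ifs with h <;> simp [h]

lemma dom_idp (A : Finset (Fin n)) : dom (idp A) = A := by
  ext x
  simp [mem_dom, idp_eq_some]

lemma comp_idp_dom (α : PT n) : comp (idp (dom α)) α = α := by
  funext x
  refine Option.ext fun z => ?_
  simp only [comp_eq_some, idp_eq_some, mem_dom]
  exact ⟨fun ⟨_, ⟨_, rfl⟩, hz⟩ => hz, fun hz => ⟨x, ⟨⟨z, hz⟩, rfl⟩, hz⟩⟩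

lemma idp_mem (hA : A ⊆ Y) : idp A ∈ POPI n Y := by
  refine ⟨fun x x' z hx hx' => ?_, OP.of_monotone fun x x' y y' hlt hy hy' => ?_, fun x y hy => ?_⟩
  · rw [(idp_eq_some.mp hx).2, (idp_eq_some.mp hx').2]
  · rw [← (idp_eq_some.mp hy).2, ← (idp_eq_some.mp hy').2]
    exact hlt.le
  · obtain ⟨hx, rfl⟩ := idp_eq_some.mp hy
    exact hA hx

noncomputable def partialInv (α : PT n) : PT n := invComp α (idp (dom α))

lemma partialInv_eq_some (hα : Inj α) {x y : Fin n} : partialInv α y = some x ↔ α x = some y := by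
  rw [partialInv, invComp_eq_some hα]
  simp only [idp_eq_some, mem_dom]
  exact ⟨fun ⟨_, hy, _, rfl⟩ => hy, fun hy => ⟨x, hy, ⟨y, hy⟩, rfl⟩⟩

lemma dom_partialInv (hα : Inj α) : dom (partialInv α) = im α := by
  ext y
  simp only [mem_dom, mem_im, partialInv_eq_some hα]

lemma comp_partialInv (hα : Inj α) : comp α (partialInv α) = idp (dom α) :=
  comp_invComp hα (dom_idp _).le

lemma partialInv_mem (hα : α ∈ POPI n Y) (hdom : dom α ⊆ Y) : partialInv α ∈ POPI n Y :=
  invComp_mem hα (idp_mem hdom) (dom_idp _).le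

end PartialIdentity

section Green

variable {n : ℕ} {Y : Finset (Fin n)} {α β γ δ : PT n}

lemma isRegularIn_POPI_iff (hα : α ∈ POPI n Y) : IsRegularIn (POPI n Y) α ↔ dom α ⊆ Y := by
  refine ⟨fun ⟨β, hβ, hαβα⟩ x hx => ?_, fun hdom => ?_⟩
  · obtain ⟨y, hy⟩ := mem_dom.mp hx
    have hxy : comp (comp α β) α x = some y := by rw [hαβα, hy]
    obtain ⟨x', hx', hx'y⟩ := comp_eq_some.mp hxy
    obtain ⟨y', hy', hy'x'⟩ := comp_eq_some.mp hx'
    rw [hy, Option.some_inj] at hy'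
    rw [hα.1 x' x y hx'y hy, ← hy'] at hy'x'
    exact hβ.2.2 y x hy'x'
  · refine ⟨partialInv α, partialInv_mem hα hdom, ?_⟩
    rw [comp_partialInv hα.1, comp_idp_dom]

lemma rRel_of_dom_eq (hα : α ∈ POPI n Y) (hβ : β ∈ POPI n Y) (hd : dom α = dom β) :
    RRel (POPI n Y) α β :=
  ⟨Or.inr ⟨invComp β α, invComp_mem hβ hα hd.le, comp_invComp hβ.1 hd.le⟩,
   Or.inr ⟨invComp α β, invComp_mem hα hβ hd.ge, comp_invComp hα.1 hd.ge⟩⟩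

/-- The factor is `αγ⁻¹`, written as `(α⁻¹)⁻¹γ⁻¹` so that `invComp_mem` applies to it. -/
lemma exists_comp_eq_of_im_eq (hα : α ∈ POPI n Y) (hγ : γ ∈ POPI n Y) (hαY : dom α ⊆ Y)
    (hγY : dom γ ⊆ Y) (him : im α = im γ) : ∃ δ ∈ POPI n Y, comp δ γ = α := by
  have hα' := partialInv_mem hα hαY
  refine ⟨_, invComp_mem hα' (partialInv_mem hγ hγY)
    (by rw [dom_partialInv hα.1, dom_partialInv hγ.1, him]), funext fun x => ?_⟩
  refine Option.ext fun y => ?_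
  simp only [comp_eq_some, invComp_eq_some hα'.1, partialInv_eq_some hα.1,
    partialInv_eq_some hγ.1]
  constructor
  · rintro ⟨u, ⟨v, hv, huv⟩, huy⟩
    rwa [← Option.some_inj.mp (huv.symm.trans huy)]
  · intro hy
    obtain ⟨u, hu⟩ := mem_im.mp (him ▸ mem_im.mpr ⟨x, hy⟩)
    exact ⟨u, ⟨y, hy, hu⟩, hu⟩

lemma lRel_of_im_eq (hα : α ∈ POPI n Y) (hγ : γ ∈ POPI n Y) (hαY : dom α ⊆ Y)
    (hγY : dom γ ⊆ Y) (him : im α = im γ) : LRel (POPI n Y) α γ :=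
  ⟨Or.inr (exists_comp_eq_of_im_eq hα hγ hαY hγY him),
   Or.inr (exists_comp_eq_of_im_eq hγ hα hγY hαY him.symm)⟩

/-- `δ` maps `dom γ` injectively into `dom α ∩ Y`, so the cardinality bound leaves no room for
points of `dom α` outside `Y`. -/
lemma dom_subset_of_comp_eq (hδ : δ ∈ POPI n Y) (h : comp δ α = γ)
    (hcard : (dom α).card ≤ (dom γ).card) : dom α ⊆ Y := by
  have hle : (dom α).card ≤ (dom α ∩ Y).card :=
    calc (dom α).card ≤ (dom γ).card := hcard
      _ ≤ (dom α ∩ im δ).card := h ▸ card_dom_comp_le hδ.1 α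
      _ ≤ (dom α ∩ Y).card :=
        Finset.card_le_card (Finset.inter_subset_inter_left (im_subset_of_mem_POPI hδ))
  exact Finset.inter_eq_left.mp (Finset.eq_of_subset_of_card_le Finset.inter_subset_left hle)

lemma LRel.eq_or_im_eq (hα : α ∈ POPI n Y) (hγ : γ ∈ POPI n Y) (h : LRel (POPI n Y) α γ) :
    α = γ ∨ im α = im γ ∧ dom α ⊆ Y ∧ dom γ ⊆ Y := by
  rcases h with ⟨h₁ | ⟨δ, hδ, h₁⟩, h₂ | ⟨δ', hδ', h₂⟩⟩
  · exact .inl h₁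
  · exact .inl h₁
  · exact .inl h₂.symm
  have him : im α = im γ := (h₁ ▸ im_comp_subset δ γ).antisymm (h₂ ▸ im_comp_subset δ' α)
  have hcard : (dom α).card = (dom γ).card := by
    rw [← rank_eq_card_dom hα.1, ← rank_eq_card_dom hγ.1, rank, rank, him]
  exact .inr ⟨him, dom_subset_of_comp_eq hδ' h₂ hcard.le, dom_subset_of_comp_eq hδ h₁ hcard.ge⟩

end Green

section OrderBijection

variable {n : ℕ} {Y A B : Finset (Fin n)}

noncomputable def ofOrderIso (e : A ≃o B) : PT n :=
  fun x => if hx : x ∈ A then some (e ⟨x, hx⟩) else none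

lemma ofOrderIso_eq_some (e : A ≃o B) {x y : Fin n} :
    ofOrderIso e x = some y ↔ ∃ hx : x ∈ A, (e ⟨x, hx⟩ : Fin n) = y := by
  unfold ofOrderIso
  split_ifs with hx <;> simp [hx]

lemma dom_ofOrderIso (e : A ≃o B) : dom (ofOrderIso e) = A := by
  ext x
  simp [mem_dom, ofOrderIso_eq_some]

lemma im_ofOrderIso (e : A ≃o B) : im (ofOrderIso e) = B := by
  ext y
  simp only [mem_im, ofOrderIso_eq_some]
  refine ⟨fun ⟨x, hx, hxy⟩ => hxy ▸ (e ⟨x, hx⟩).2, fun hy => ?_⟩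
  exact ⟨e.symm ⟨y, hy⟩, (e.symm ⟨y, hy⟩).2, by simp⟩

lemma ofOrderIso_mem (e : A ≃o B) (hB : B ⊆ Y) : ofOrderIso e ∈ POPI n Y := by
  refine ⟨fun x x' z hx hx' => ?_, OP.of_monotone fun x x' y y' hlt hy hy' => ?_,
    fun x y hy => ?_⟩
  · obtain ⟨hx, rfl⟩ := (ofOrderIso_eq_some e).mp hx
    obtain ⟨hx', hxx'⟩ := (ofOrderIso_eq_some e).mp hx'
    exact congrArg Subtype.val (e.injective (Subtype.ext hxx'.symm))
  · obtain ⟨hx, rfl⟩ := (ofOrderIso_eq_some e).mp hy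
    obtain ⟨hx', rfl⟩ := (ofOrderIso_eq_some e).mp hy'
    exact e.monotone (Subtype.mk_le_mk.mpr hlt.le)
  · obtain ⟨hx, rfl⟩ := (ofOrderIso_eq_some e).mp hy
    exact hB (e ⟨x, hx⟩).2

lemma exists_mem_POPI_dom_im (hc : A.card = B.card) (hB : B ⊆ Y) :
    ∃ γ ∈ POPI n Y, dom γ = A ∧ im γ = B :=
  let e : A ≃o B := (A.orderIsoOfFin hc).symm.trans (B.orderIsoOfFin rfl)
  ⟨ofOrderIso e, ofOrderIso_mem e hB, dom_ofOrderIso e, im_ofOrderIso e⟩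

end OrderBijection

theorem green_D_general {n : ℕ} (Y : Finset (Fin n))
    (α β : PT n) (hα : α ∈ POPI n Y) (hβ : β ∈ POPI n Y) :
    DRel (POPI n Y) α β ↔
      (IsRegularIn (POPI n Y) α ∧ IsRegularIn (POPI n Y) β ∧ rank α = rank β) ∨
      (¬ IsRegularIn (POPI n Y) α ∧ ¬ IsRegularIn (POPI n Y) β ∧ dom α = dom β) := by
  rw [isRegularIn_POPI_iff hα, isRegularIn_POPI_iff hβ, rank_eq_card_dom hα.1,
    rank_eq_card_dom hβ.1]
  constructor
  · rintro ⟨γ, hγ, hL, hR⟩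
    rcases hL.eq_or_im_eq hα hγ with rfl | ⟨him, hαY, hγY⟩
    · rw [hR.dom_eq]
      tauto
    · refine .inl ⟨hαY, hR.dom_eq ▸ hγY, ?_⟩
      rw [← hR.dom_eq, ← rank_eq_card_dom hα.1, ← rank_eq_card_dom hγ.1, rank, rank, him]
  · rintro (⟨hαY, hβY, hcard⟩ | ⟨-, -, hdom⟩)
    · obtain ⟨γ, hγ, hdom, him⟩ := exists_mem_POPI_dom_im
        (by rw [← hcard, ← rank_eq_card_dom hα.1, rank]) (im_subset_of_mem_POPI hα)
      exact ⟨γ, hγ, lRel_of_im_eq hα hγ hαY (hdom ▸ hβY) him.symm, rRel_of_dom_eq hγ hβ hdom⟩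
    · exact ⟨α, hα, ⟨.inl rfl, .inl rfl⟩, rRel_of_dom_eq hα hβ hdom⟩

/-- Green's 𝒟 on `POPI_n(Y)`. -/
theorem green_D {n : ℕ} (Y : Finset (Fin n)) (hY : Y.Nonempty)
    (α β : PT n) (hα : α ∈ POPI n Y) (hβ : β ∈ POPI n Y) :
    DRel (POPI n Y) α β ↔
      (IsRegularIn (POPI n Y) α ∧ IsRegularIn (POPI n Y) β ∧ rank α = rank β) ∨
      (¬ IsRegularIn (POPI n Y) α ∧ ¬ IsRegularIn (POPI n Y) β ∧ dom α = dom β) :=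
  green_D_general Y α β hα hβ

end POPIpaper
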